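/- Let I be a finite category. The full subcategory of the functor category (I ⥤ FintypeCat) ⥤ FintypeCat consisting of those functors that preserve finite limits and finite colimits is equivalent to the idempotent completion Karoubi I; in particular, every finite-limit- and finite-colimit-preserving functor (I ⥤ FintypeCat) ⥤ FintypeCat is isomorphic to the evaluation functor at some object of Karoubi I. -/

import Mathlib

open CategoryTheory CategoryTheory.Limits CategoryTheory.Idempotents

universe u

/-- The evaluation functor associated to an object `x` of the idempotent completion
`Karoubi I`: it sends `X : I ⥤ FintypeCat` to the retract of `X.obj x.X` given by splitting
the idempotent `X.map x.p`, realized as the set of its fixed points. -/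
noncomputable def karoubiEval {I : Type u} [SmallCategory I] (x : Karoubi I) :
    (I ⥤ FintypeCat.{u}) ⥤ FintypeCat.{u} where
  obj X :=
    haveI : DecidablePred (fun a : X.obj x.X => X.map x.p a = a) := fun _ => Classical.dec _
    FintypeCat.of {a : X.obj x.X // X.map x.p a = a}
  map {X Y} f := FintypeCat.homMk fun a => ⟨f.app x.X a.1, by
    have h := congrFun (congrArg (fun (g : X.obj x.X ⟶ Y.obj x.X) => (g : X.obj x.X → Y.obj x.X))
      (f.naturality x.p)) a.1
    simp only [ConcreteCategory.comp_apply, a.2] at h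
    exact h.symm⟩
  map_id X := by
    ext a
    rfl
  map_comp f g := by
    ext a
    rfl


/-!
A functor `F : (I ⥤ FintypeCat) ⥤ FintypeCat` preserving finite colimits is determined by its
values on the corepresentables `Hom(i, -)`, since every `X` is a quotient of a finite coproduct
of them. Preservation of finite limits makes the category of elements of `F` cofiltered, and
hence also its full subcategory of elements living over corepresentables, which is moreover
finite. A cone over the identity of that finite cofiltered category has an apex `(i, ξ)` whose
leg to itself is an idempotent `e` of `i`; the pair `(i, e)` pro-represents `F`, i.e.
`a ↦ F (a : Hom(i, -) ⟶ X) ξ` identifies `karoubiEval (i, e)` with `F`. Full faithfulness of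
`x ↦ karoubiEval x` is the Yoneda lemma.
-/

open Opposite

universe w

section Retract

variable {A B J : Type*} [Category A] [Category B] [Category J] {H E : A ⥤ B}

lemma preservesLimitsOfShape_of_retract (h : Retract H E) [PreservesLimitsOfShape J E] :
    PreservesLimitsOfShape J H where
  preservesLimit {K} := ⟨fun {t} ht => by
    have hE := isLimitOfPreserves E ht
    have hir (X : A) : h.i.app X ≫ h.r.app X = 𝟙 _ := NatTrans.congr_app h.retract X
    let lift (s : Cone (K ⋙ H)) := hE.lift ((Cone.postcompose (Functor.whiskerLeft K h.i)).obj s)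
    exact ⟨{
      lift s := lift s ≫ h.r.app t.pt
      fac s j := by
        have := hE.fac ((Cone.postcompose (Functor.whiskerLeft K h.i)).obj s) j
        dsimp at this ⊢
        rw [Category.assoc, ← h.r.naturality, reassoc_of% this, hir, Category.comp_id]
      uniq s m hm := by
        have : m ≫ h.i.app t.pt = lift s :=
          hE.uniq ((Cone.postcompose (Functor.whiskerLeft K h.i)).obj s) _ fun j => by
            have := hm j
            dsimp at this ⊢
            rw [Category.assoc, ← h.i.naturality, reassoc_of% this]
        rw [← this, Category.assoc, hir]
        exact (Category.comp_id m).symm }⟩⟩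

lemma preservesColimitsOfShape_of_retract (h : Retract H E) [PreservesColimitsOfShape J E] :
    PreservesColimitsOfShape J H where
  preservesColimit {K} := ⟨fun {t} ht => by
    have hE := isColimitOfPreserves E ht
    have hir (X : A) : h.i.app X ≫ h.r.app X = 𝟙 _ := NatTrans.congr_app h.retract X
    let desc (s : Cocone (K ⋙ H)) :=
      hE.desc ((Cocone.precompose (Functor.whiskerLeft K h.r)).obj s)
    exact ⟨{
      desc s := h.i.app t.pt ≫ desc s
      fac s j := by
        have := hE.fac ((Cocone.precompose (Functor.whiskerLeft K h.r)).obj s) j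
        dsimp at this ⊢
        rw [h.i.naturality_assoc, this, reassoc_of% hir]
      uniq s m hm := by
        have : h.r.app t.pt ≫ m = desc s :=
          hE.uniq ((Cocone.precompose (Functor.whiskerLeft K h.r)).obj s) _ fun j => by
            have := hm j
            dsimp at this ⊢
            rw [h.r.naturality_assoc, this]
        rw [← this, reassoc_of% hir] }⟩⟩

end Retract

def CategoryTheory.Functor.FullyFaithful.elementsPrecomp {C D : Type*} [Category C] [Category D]
    {F : C ⥤ D} (hF : F.FullyFaithful) (G : D ⥤ Type w) :
    (Functor.Elements.precomp F G).FullyFaithful where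
  preimage {x _} f := ⟨hF.preimage f.1,
    (ConcreteCategory.congr_hom (congrArg G.map (hF.map_preimage f.1)) x.2).trans f.2⟩
  map_preimage f := by ext; exact hF.map_preimage f.1
  preimage_map f := by ext; exact hF.preimage_map f.1

noncomputable instance {J : Type w} [SmallCategory J] [FinCategory J] (G : J ⥤ Type w)
    [∀ j, Finite (G.obj j)] : FinCategory G.Elements where
  fintypeObj := Fintype.ofFinite (Σ j, G.obj j)
  fintypeHom p q := Fintype.ofFinite {f : p.1 ⟶ q.1 // G.map f p.2 = q.2}

section KaroubiEval

variable {I : Type u} [SmallCategory I]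

noncomputable def karoubiEvalRetract (x : Karoubi I) :
    Retract (karoubiEval x) ((evaluation I FintypeCat.{u}).obj x.X) where
  i := { app X := FintypeCat.homMk Subtype.val }
  r :=
    { app X := FintypeCat.homMk fun a =>
        ⟨X.map x.p a, by rw [← FintypeCat.comp_apply, ← X.map_comp, x.idem]⟩
      naturality X Y f := by
        ext a
        exact Subtype.ext (ConcreteCategory.congr_hom (f.naturality x.p) a).symm }
  retract := by
    ext X a
    exact Subtype.ext a.2

instance (x : Karoubi I) : PreservesFiniteLimits (karoubiEval x) where
  preservesFiniteLimits _ := preservesLimitsOfShape_of_retract (karoubiEvalRetract x)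

instance (x : Karoubi I) : PreservesFiniteColimits (karoubiEval x) where
  preservesFiniteColimits _ := preservesColimitsOfShape_of_retract (karoubiEvalRetract x)

noncomputable def karoubiEvalFunctor : Karoubi I ⥤ (I ⥤ FintypeCat.{u}) ⥤ FintypeCat.{u} where
  obj := karoubiEval
  map {x y} f :=
    { app X := FintypeCat.homMk fun a => ⟨X.map f.f a.1, by
        rw [← FintypeCat.comp_apply, ← X.map_comp, Karoubi.comp_p]⟩
      naturality X Y g := by
        ext a
        exact Subtype.ext (ConcreteCategory.congr_hom (g.naturality f.f) a.1).symm }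
  map_id x := by
    ext X a
    exact Subtype.ext a.2
  map_comp f g := by
    ext X a
    exact Subtype.ext (ConcreteCategory.congr_hom (X.map_comp f.f g.f) a.1)

end KaroubiEval

section FinCoyoneda

variable {I : Type u} [SmallCategory I] [FinCategory I]

/-- An `abbrev`, so that `(finCoyoneda.obj i).obj j` is reducibly the type `i.unop ⟶ j`. -/
abbrev finCoyoneda : Iᵒᵖ ⥤ I ⥤ FintypeCat.{u} where
  obj i :=
    { obj j := FintypeCat.of (i.unop ⟶ j)
      map f := FintypeCat.homMk (· ≫ f) }
  map f :=
    { app j := FintypeCat.homMk (f.unop ≫ ·)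
      naturality _ _ _ := by ext; exact (Category.assoc _ _ _).symm }

variable {X Y : I ⥤ FintypeCat.{u}} {k : I}

def finCoyonedaHom (a : X.obj k) : finCoyoneda.obj (op k) ⟶ X where
  app j := FintypeCat.homMk fun g => X.map g a
  naturality _ _ h := by
    ext g
    exact ConcreteCategory.congr_hom (X.map_comp g h) a

lemma finCoyonedaHom_app (a : X.obj k) {j : I} (g : k ⟶ j) :
    (finCoyonedaHom a).app j g = X.map g a :=
  rfl

lemma finCoyonedaHom_app_id (a : X.obj k) : (finCoyonedaHom a).app k (𝟙 k) = a := by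
  rw [finCoyonedaHom_app, X.map_id]
  rfl

lemma finCoyonedaHom_app_id_eq (τ : finCoyoneda.obj (op k) ⟶ X) :
    finCoyonedaHom (τ.app k (𝟙 k)) = τ := by
  ext j g
  rw [finCoyonedaHom_app, ← FintypeCat.comp_apply, ← τ.naturality]
  show τ.app j (𝟙 k ≫ g) = τ.app j g
  rw [Category.id_comp]

lemma finCoyonedaHom_injective : Function.Injective (finCoyonedaHom : X.obj k → _) :=
  fun a a' h => by rw [← finCoyonedaHom_app_id a, ← finCoyonedaHom_app_id a', h]

lemma finCoyonedaHom_comp (a : X.obj k) (f : X ⟶ Y) :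
    finCoyonedaHom a ≫ f = finCoyonedaHom (f.app k a) := by
  ext j g
  exact ConcreteCategory.congr_hom (f.naturality g) a

lemma finCoyoneda_map_op_comp_finCoyonedaHom {j : I} (g : j ⟶ k) (a : X.obj j) :
    finCoyoneda.map g.op ≫ finCoyonedaHom a = finCoyonedaHom (X.map g a) :=
  finCoyonedaHom_comp (X := finCoyoneda.obj (op j)) g (finCoyonedaHom a)

def finCoyonedaFullyFaithful : (finCoyoneda (I := I)).FullyFaithful where
  preimage {i j} τ := (τ.app i.unop (𝟙 _)).op
  map_preimage τ := finCoyonedaHom_app_id_eq τ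
  preimage_map f := by
    apply Quiver.Hom.unop_inj
    exact Category.comp_id f.unop

lemma exists_map_finCoyonedaHom_eq (F : (I ⥤ FintypeCat.{u}) ⥤ FintypeCat.{u})
    [PreservesFiniteColimits F] (w : F.obj X) :
    ∃ (k : I) (a : X.obj k) (c : F.obj (finCoyoneda.obj (op k))),
      F.map (finCoyonedaHom a) c = w := by
  let ι := Σ k : I, X.obj k
  have : Fintype ι := Fintype.ofFinite ι
  let π : ∐ (fun s : ι => finCoyoneda.obj (op s.1)) ⟶ X :=
    Sigma.desc fun s => finCoyonedaHom s.2
  have : Epi π := ⟨fun {Z} g h hgh => by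
    ext k a
    have := congrArg (fun φ => φ.app k (𝟙 k)) (Sigma.ι _ ⟨k, a⟩ ≫= hgh)
    simp only [π, Sigma.ι_desc_assoc, finCoyonedaHom_comp] at this
    rwa [finCoyonedaHom_app_id, finCoyonedaHom_app_id] at this⟩
  obtain ⟨v, rfl⟩ :=
    (ConcreteCategory.epi_iff_surjective_of_preservesPushout (F.map π)).1 inferInstance w
  obtain ⟨⟨s⟩, c, rfl⟩ := FintypeCat.jointly_surjective _ _ (isColimitOfPreserves F
    (colimit.isColimit (Discrete.functor fun s : ι => finCoyoneda.obj (op s.1)))) v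
  refine ⟨s.1, s.2, c, ?_⟩
  show _ = F.map π (F.map (Sigma.ι _ s) c)
  rw [← FintypeCat.comp_apply, ← F.map_comp, Sigma.ι_desc]

end FinCoyoneda

section KaroubiEvalFullyFaithful

variable {I : Type u} [SmallCategory I] [FinCategory I]

def karoubiEvalUniversalElement (x : Karoubi I) :
    (karoubiEval x).obj (finCoyoneda.obj (op x.X)) :=
  ⟨x.p, x.idem⟩

variable {x y : Karoubi I}

lemma karoubiEval_map_finCoyonedaHom_universalElement {X : I ⥤ FintypeCat.{u}}
    (a : (karoubiEval x).obj X) :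
    (karoubiEval x).map (finCoyonedaHom a.1) (karoubiEvalUniversalElement x) = a :=
  Subtype.ext a.2

lemma karoubiEval_natTrans_app_eq (τ : karoubiEval x ⟶ karoubiEval y)
    {X : I ⥤ FintypeCat.{u}} (a : (karoubiEval x).obj X) :
    τ.app X a =
      (karoubiEval y).map (finCoyonedaHom a.1) (τ.app _ (karoubiEvalUniversalElement x)) := by
  conv_lhs => rw [← karoubiEval_map_finCoyonedaHom_universalElement a]
  exact ConcreteCategory.congr_hom (τ.naturality (finCoyonedaHom a.1)) _

noncomputable def karoubiEvalFunctorFullyFaithful :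
    (karoubiEvalFunctor (I := I)).FullyFaithful where
  preimage {x y} τ :=
    have hp : x.p ≫ (τ.app _ (karoubiEvalUniversalElement x)).1 =
        (τ.app _ (karoubiEvalUniversalElement x)).1 :=
      congrArg Subtype.val (karoubiEval_natTrans_app_eq τ (karoubiEvalUniversalElement x)).symm
    have hq := (τ.app _ (karoubiEvalUniversalElement x)).2
    ⟨_, (congrArg (x.p ≫ ·) hq).trans hp⟩
  map_preimage τ := by
    ext X a
    exact (karoubiEval_natTrans_app_eq τ a).symm
  preimage_map f := by
    ext
    exact Karoubi.p_comp f

instance : (karoubiEvalFunctor (I := I)).Full := karoubiEvalFunctorFullyFaithful.full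

instance : (karoubiEvalFunctor (I := I)).Faithful := karoubiEvalFunctorFullyFaithful.faithful

end KaroubiEvalFullyFaithful

section Representation

variable {I : Type u} [SmallCategory I] [FinCategory I]
  (F : (I ⥤ FintypeCat.{u}) ⥤ FintypeCat.{u})

abbrev CoreprElements := (finCoyoneda ⋙ F ⋙ FintypeCat.incl).Elements

noncomputable instance : FinCategory (CoreprElements F) :=
  have (i : Iᵒᵖ) : Finite ((finCoyoneda ⋙ F ⋙ FintypeCat.incl).obj i) :=
    inferInstanceAs (Finite (F.obj (finCoyoneda.obj i)))
  inferInstance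

abbrev coreprElementsInclusion : CoreprElements F ⥤ (F ⋙ FintypeCat.incl).Elements :=
  Functor.Elements.precomp finCoyoneda (F ⋙ FintypeCat.incl)

instance : (coreprElementsInclusion F).Full :=
  (finCoyonedaFullyFaithful.elementsPrecomp _).full

instance : (coreprElementsInclusion F).Faithful :=
  (finCoyonedaFullyFaithful.elementsPrecomp _).faithful

lemma exists_coreprElementsInclusion_hom [PreservesFiniteColimits F]
    (d : (F ⋙ FintypeCat.incl).Elements) :
    ∃ c, Nonempty ((coreprElementsInclusion F).obj c ⟶ d) := by
  obtain ⟨k, a, c, hc⟩ := exists_map_finCoyonedaHom_eq F d.2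
  exact ⟨⟨op k, c⟩, ⟨⟨finCoyonedaHom a, hc⟩⟩⟩

instance [PreservesFiniteLimits F] : IsCofiltered (F ⋙ FintypeCat.incl).Elements :=
  Functor.isCofiltered_elements _

variable [PreservesFiniteLimits F] [PreservesFiniteColimits F]

instance : IsCofiltered (CoreprElements F) :=
  .of_exists_of_isCofiltered_of_fullyFaithful _ (exists_coreprElementsInclusion_hom F)

instance : (coreprElementsInclusion F).Initial :=
  Functor.initial_of_exists_of_isCofiltered_of_fullyFaithful _
    (exists_coreprElementsInclusion_hom F)

noncomputable def genericElement : CoreprElements F :=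
  (IsCofiltered.cone (𝟭 (CoreprElements F))).pt

noncomputable def genericElementHom (c : CoreprElements F) : genericElement F ⟶ c :=
  (IsCofiltered.cone (𝟭 (CoreprElements F))).π.app c

lemma genericElementHom_comp {c c' : CoreprElements F} (f : c ⟶ c') :
    genericElementHom F c ≫ f = genericElementHom F c' :=
  (IsCofiltered.cone (𝟭 (CoreprElements F))).w f

noncomputable def representingObject : Karoubi I where
  X := (genericElement F).1.unop
  p := (genericElementHom F (genericElement F)).1.unop
  idem := congrArg (fun f => f.1.unop)
    (genericElementHom_comp F (genericElementHom F (genericElement F)))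

noncomputable def fromKaroubiEvalRepresentingObject : karoubiEval (representingObject F) ⟶ F where
  app X := FintypeCat.homMk fun a => F.map (finCoyonedaHom a.1) (genericElement F).2
  naturality X Y f := by
    ext a
    change F.map (finCoyonedaHom (f.app _ a.1)) _ = F.map f (F.map (finCoyonedaHom a.1) _)
    rw [← finCoyonedaHom_comp, F.map_comp]
    rfl

lemma finCoyoneda_map_genericElementHom_comp {X : I ⥤ FintypeCat.{u}}
    (a : X.obj (representingObject F).X) :
    finCoyoneda.map (genericElementHom F (genericElement F)).1 ≫ finCoyonedaHom a =
      finCoyonedaHom (X.map (representingObject F).p a) :=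
  finCoyoneda_map_op_comp_finCoyonedaHom _ a

lemma fromKaroubiEvalRepresentingObject_app_injective (X : I ⥤ FintypeCat.{u}) :
    Function.Injective ((fromKaroubiEvalRepresentingObject F).app X) := by
  intro a a' h
  let d : (F ⋙ FintypeCat.incl).Elements := ⟨X, (fromKaroubiEvalRepresentingObject F).app X a⟩
  let s : (coreprElementsInclusion F).obj (genericElement F) ⟶ d := ⟨finCoyonedaHom a.1, rfl⟩
  let s' : (coreprElementsInclusion F).obj (genericElement F) ⟶ d :=
    ⟨finCoyonedaHom a'.1, h.symm⟩
  obtain ⟨c, t, ht⟩ := Functor.Initial.exists_eq (coreprElementsInclusion F) s s'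
  have he : (coreprElementsInclusion F).map (genericElementHom F (genericElement F)) ≫ s =
      (coreprElementsInclusion F).map (genericElementHom F (genericElement F)) ≫ s' := by
    rw [← genericElementHom_comp F t, Functor.map_comp, Category.assoc, Category.assoc, ht]
  have ha := (finCoyoneda_map_genericElementHom_comp F a.1).trans (congrArg finCoyonedaHom a.2)
  have ha' := (finCoyoneda_map_genericElementHom_comp F a'.1).trans (congrArg finCoyonedaHom a'.2)
  exact Subtype.ext (finCoyonedaHom_injective (ha.symm.trans ((congrArg Subtype.val he).trans ha')))

lemma fromKaroubiEvalRepresentingObject_app_surjective (X : I ⥤ FintypeCat.{u}) :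
    Function.Surjective ((fromKaroubiEvalRepresentingObject F).app X) := by
  intro w
  let d : (F ⋙ FintypeCat.incl).Elements := ⟨X, w⟩
  obtain ⟨c, ⟨h⟩⟩ := exists_coreprElementsInclusion_hom F d
  let φ : (coreprElementsInclusion F).obj (genericElement F) ⟶ d :=
    (coreprElementsInclusion F).map (genericElementHom F c) ≫ h
  have hfix :
      (coreprElementsInclusion F).map (genericElementHom F (genericElement F)) ≫ φ = φ := by
    rw [← Category.assoc, ← Functor.map_comp, genericElementHom_comp]
  let a := φ.1.app _ (𝟙 _)
  have hφ : finCoyonedaHom a = φ.1 := finCoyonedaHom_app_id_eq _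
  have ha : X.map (representingObject F).p a = a := finCoyonedaHom_injective <|
    (finCoyoneda_map_genericElementHom_comp F a).symm.trans <|
      (congrArg (_ ≫ ·) hφ).trans ((congrArg Subtype.val hfix).trans hφ.symm)
  refine ⟨⟨a, ha⟩, ?_⟩
  change F.map (finCoyonedaHom a) _ = w
  rw [hφ]
  exact φ.2

noncomputable def isoKaroubiEvalRepresentingObject : F ≅ karoubiEval (representingObject F) :=
  have (X : I ⥤ FintypeCat.{u}) : IsIso ((fromKaroubiEvalRepresentingObject F).app X) :=
    (ConcreteCategory.isIso_iff_bijective _).2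
      ⟨fromKaroubiEvalRepresentingObject_app_injective F X,
        fromKaroubiEvalRepresentingObject_app_surjective F X⟩
  have : IsIso (fromKaroubiEvalRepresentingObject F) := NatIso.isIso_of_isIso_app _
  (asIso (fromKaroubiEvalRepresentingObject F)).symm

end Representation

theorem stmt_14 (I : Type u) [SmallCategory I] [FinCategory I] :
    Nonempty ((ObjectProperty.FullSubcategory fun F : (I ⥤ FintypeCat.{u}) ⥤ FintypeCat.{u} =>
        PreservesFiniteLimits F ∧ PreservesFiniteColimits F) ≌ Karoubi I) ∧
      ∀ F : (I ⥤ FintypeCat.{u}) ⥤ FintypeCat.{u},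
        PreservesFiniteLimits F → PreservesFiniteColimits F →
          ∃ x : Karoubi I, Nonempty (F ≅ karoubiEval x) := by
  refine ⟨?_, fun F _ _ => ⟨representingObject F, ⟨isoKaroubiEvalRepresentingObject F⟩⟩⟩
  let P : ObjectProperty ((I ⥤ FintypeCat.{u}) ⥤ FintypeCat.{u}) :=
    fun F => PreservesFiniteLimits F ∧ PreservesFiniteColimits F
  let Φ : Karoubi I ⥤ P.FullSubcategory :=
    P.lift karoubiEvalFunctor fun x =>
      ⟨inferInstanceAs (PreservesFiniteLimits (karoubiEval x)),
        inferInstanceAs (PreservesFiniteColimits (karoubiEval x))⟩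
  have : Φ.EssSurj := ⟨fun F =>
    have := F.property.1
    have := F.property.2
    ⟨representingObject F.obj,
      ⟨P.ι.preimageIso (isoKaroubiEvalRepresentingObject F.obj).symm⟩⟩⟩
  have : Φ.IsEquivalence := {}
  exact ⟨Φ.asEquivalence.symm⟩
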